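/- arXiv:math/0612003 — 5 statements merged into one kernel-verified Lean document; each statement's English description precedes it below -/
import Mathlib

section
/- Let G = (V,E) be a finite connected simple graph. A function δ : V → ℕ is the outdegree function of some orientation of G if and only if exc_δ(V) = 0 (equivalently Σ_{v∈V} δ(v) = |E|) and exc_δ(U) ≥ 0 for every subset U ⊆ V. -/
/-- An orientation of a simple graph: a choice of direction for each edge. -/
structure GraphOrientation {V : Type*} (G : SimpleGraph V) where
  dir : V → V → Prop
  adj_of_dir : ∀ u v, dir u v → G.Adj u v
  dir_iff_not : ∀ u v, G.Adj u v → (dir u v ↔ ¬ dir v u)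

namespace GraphOrientation

variable {V : Type*} {G : SimpleGraph V}

/-- The outdegree of a vertex: the number of edges directed away from it. -/
noncomputable def outDegree (O : GraphOrientation G) (v : V) : ℕ :=
  {u | O.dir v u}.ncard

/-- `v` is reachable from `u` by a directed path. -/
def Reaches (O : GraphOrientation G) : V → V → Prop :=
  Relation.ReflTransGen O.dir

/-- `C` is the edge set of a directed cycle of the orientation. -/
def IsDirCycle (O : GraphOrientation G) (C : Set (Sym2 V)) : Prop :=
  ∃ (v : V) (w : G.Walk v v), w.IsCycle ∧
    (∀ d ∈ w.darts, O.dir d.toProd.1 d.toProd.2) ∧ C = {e | e ∈ w.edges}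

/-- The orientation is strongly connected. -/
def IsStronglyConnected (O : GraphOrientation G) : Prop := ∀ u v, O.Reaches u v

/-- Every vertex is reachable from `v0`. -/
def IsConnectedFrom (O : GraphOrientation G) (v0 : V) : Prop := ∀ v, O.Reaches v0 v

/-- The set of edges on which two orientations differ. -/
def diffSet (O O' : GraphOrientation G) : Set (Sym2 V) :=
  {e | ∃ a b, e = s(a, b) ∧ O.dir a b ∧ O'.dir b a}

/-- `O'` is obtained from `O` by reversing exactly the edges of `A`. -/
def IsFlipOn (O O' : GraphOrientation G) (A : Set (Sym2 V)) : Prop :=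
  (∀ u v, s(u, v) ∈ A → (O'.dir u v ↔ O.dir v u)) ∧
    (∀ u v, s(u, v) ∉ A → (O'.dir u v ↔ O.dir u v))

/-- One cycle-flip step. -/
def CycleFlip (O O' : GraphOrientation G) : Prop :=
  ∃ C, O.IsDirCycle C ∧ O.IsFlipOn O' C

end GraphOrientation

/-- The cut defined by a vertex subset `U`: edges with exactly one endpoint in `U`. -/
def SimpleGraph.cutSet {V : Type*} (G : SimpleGraph V) (U : Set V) : Set (Sym2 V) :=
  {e | ∃ a b, e = s(a, b) ∧ G.Adj a b ∧ a ∈ U ∧ b ∉ U}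

/-- A cocycle: a minimal nonempty cut. -/
def SimpleGraph.IsCocycle {V : Type*} (G : SimpleGraph V) (D : Set (Sym2 V)) : Prop :=
  D.Nonempty ∧ (∃ U : Set V, D = G.cutSet U) ∧
    ∀ D' : Set (Sym2 V), D'.Nonempty → (∃ U : Set V, D' = G.cutSet U) → D' ⊆ D → D' = D

/-- A directed cocycle: a cocycle all of whose edges are directed toward the same side. -/
def GraphOrientation.IsDirCocycle {V : Type*} {G : SimpleGraph V}
    (O : GraphOrientation G) (D : Set (Sym2 V)) : Prop :=
  G.IsCocycle D ∧ ∃ U : Set V, D = G.cutSet U ∧ ∀ a b, O.dir a b → s(a, b) ∈ D → b ∈ U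

/-- The excess of a subset of vertices with respect to `δ : V → ℕ`. -/
noncomputable def SimpleGraph.excess {V : Type*} (G : SimpleGraph V) (δ : V → ℕ)
    (U : Finset V) : ℤ :=
  (∑ u ∈ U, (δ u : ℤ)) - ({e | e ∈ G.edgeSet ∧ ∀ x ∈ e, x ∈ U} : Set (Sym2 V)).ncard

/-- `C` is the edge set of a cycle of `G`. -/
def SimpleGraph.IsCycleEdgeSet {V : Type*} (G : SimpleGraph V) (C : Set (Sym2 V)) : Prop :=
  ∃ (v : V) (w : G.Walk v v), w.IsCycle ∧ C = {e | e ∈ w.edges}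

/-- The number of connected components of the spanning subgraph `(V, S)`. -/
noncomputable def numComponents (V : Type*) (S : Set (Sym2 V)) : ℕ :=
  Nat.card (SimpleGraph.fromEdgeSet S).ConnectedComponent

/-!
Counting every edge at its tail, the outdegrees of an orientation sum over `U` to the number of
edges whose tail lies in `U`: at least the number of edges inside `U`, and exactly `|E|` for
`U = V`.

Conversely, give every vertex `v` a set of `δ v` slots and ask for an injective assignment of a
slot at one of its endpoints to every edge. Hall's condition for a set `S` of edges reads
`|S| ≤ Σ_{u ∈ U} δ u` with `U` the set of endpoints of `S`, which follows from `exc_δ(U) ≥ 0`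
since `S` lies inside `U`. The endpoint owning the slot of an edge is its tail; at most `δ v`
edges get tail `v`, and `Σ δ = |E|` forces equality everywhere.
-/

open Finset

open scoped Classical

namespace Finset

lemma card_fiber_eq_of_le_of_sum_eq {ι α : Type*} [Fintype ι] [Fintype α] (f : ι → α)
    (n : α → ℕ) (hle : ∀ a, #{i | f i = a} ≤ n a) (hsum : ∑ a, n a = Fintype.card ι)
    (a : α) :
    #{i | f i = a} = n a := by
  have hfib : ∑ a, #{i | f i = a} = ∑ a, n a := by
    rw [hsum, ← card_univ, card_eq_sum_card_fiberwise fun i _ => mem_univ (f i)]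
  exact (sum_eq_sum_iff_of_le fun a _ => hle a).1 hfib a (mem_univ a)

lemma card_filter_fst_eq_le_of_injective {ι α : Type*} [Fintype ι] {n : α → ℕ}
    {f : ι → Σ a, Fin (n a)} (hf : Function.Injective f) (a : α) :
    #{i | (f i).1 = a} ≤ n a := by
  rw [← card_range (n a)]
  refine card_le_card_of_injOn (fun i => ((f i).2 : ℕ)) (fun i hi => ?_) fun i hi j hj h => ?_
  · simp only [coe_filter, mem_univ, true_and, Set.mem_ofPred_eq] at hi
    simp [← hi]
  · simp only [coe_filter, mem_univ, true_and, Set.mem_ofPred_eq] at hi hj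
    exact hf (Sigma.ext (hi.trans hj.symm) ((Fin.heq_ext_iff (by rw [hi, hj])).2 h))

end Finset

namespace SimpleGraph

variable {V : Type*} [Fintype V] (G : SimpleGraph V)

noncomputable def edgesWithin (U : Finset V) : Finset (Sym2 V) :=
  {e ∈ G.edgeFinset | ∀ x ∈ e, x ∈ U}

@[simp]
lemma mem_edgesWithin {U : Finset V} {e : Sym2 V} :
    e ∈ G.edgesWithin U ↔ e ∈ G.edgeSet ∧ ∀ x ∈ e, x ∈ U := by
  simp [edgesWithin]

lemma edgesWithin_univ : G.edgesWithin univ = G.edgeFinset :=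
  filter_true_of_mem fun _ _ x _ => mem_univ x

lemma excess_eq (δ : V → ℕ) (U : Finset V) :
    G.excess δ U = ∑ u ∈ U, (δ u : ℤ) - #(G.edgesWithin U) := by
  rw [excess, ← Set.ncard_coe_finset]
  congr
  ext e
  simp

lemma excess_nonneg_iff (δ : V → ℕ) (U : Finset V) :
    0 ≤ G.excess δ U ↔ #(G.edgesWithin U) ≤ ∑ u ∈ U, δ u := by
  rw [excess_eq, sub_nonneg]
  exact_mod_cast Iff.rfl

lemma excess_univ_eq_zero_iff (δ : V → ℕ) :
    G.excess δ univ = 0 ↔ ∑ u, δ u = #G.edgeFinset := by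
  rw [excess_eq, sub_eq_zero, edgesWithin_univ]
  exact_mod_cast Iff.rfl

end SimpleGraph

namespace GraphOrientation

variable {V : Type*} {G : SimpleGraph V} (O : GraphOrientation G)

lemma not_dir_of_dir {a b : V} (h : O.dir a b) : ¬ O.dir b a :=
  (O.dir_iff_not a b (O.adj_of_dir a b h)).1 h

lemma dir_or_dir {a b : V} (h : G.Adj a b) : O.dir a b ∨ O.dir b a :=
  or_iff_not_imp_left.2 (O.dir_iff_not b a h.symm).2

lemma injOn_sym2Mk : Set.InjOn (fun p : V × V => s(p.1, p.2)) {p | O.dir p.1 p.2} := by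
  intro p hp q hq h
  rcases Sym2.mk_eq_mk_iff.1 h with rfl | rfl
  · rfl
  · exact absurd hq (O.not_dir_of_dir hp)

variable [Fintype V]

lemma outDegree_eq_card (v : V) : O.outDegree v = #{u | O.dir v u} := by
  simp [outDegree, Set.ncard_eq_toFinset_card']

lemma sum_outDegree_eq_card_dir (U : Finset V) :
    ∑ u ∈ U, O.outDegree u = #{p ∈ U ×ˢ univ | O.dir p.1 p.2} := by
  simp only [outDegree_eq_card, card_filter, sum_product]

lemma card_edgesWithin_le_sum_outDegree (U : Finset V) :
    #(G.edgesWithin U) ≤ ∑ u ∈ U, O.outDegree u := by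
  rw [sum_outDegree_eq_card_dir]
  refine card_le_card_of_surjOn (fun p : V × V => s(p.1, p.2)) fun e he => ?_
  induction e using Sym2.ind with
  | _ a b =>
    obtain ⟨hab, hU⟩ := G.mem_edgesWithin.1 he
    rcases O.dir_or_dir hab with h | h
    · exact ⟨(a, b), by simp [hU a (Sym2.mem_mk_left a b), h], rfl⟩
    · exact ⟨(b, a), by simp [hU b (Sym2.mem_mk_right a b), h], Sym2.eq_swap⟩

lemma sum_outDegree_eq_card_edgeFinset : ∑ u, O.outDegree u = #G.edgeFinset := by
  refine le_antisymm ?_ (G.edgesWithin_univ ▸ O.card_edgesWithin_le_sum_outDegree univ)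
  rw [sum_outDegree_eq_card_dir]
  refine card_le_card_of_injOn (fun p : V × V => s(p.1, p.2)) (fun p hp => ?_)
    (O.injOn_sym2Mk.mono fun p hp => ?_)
  · exact G.mem_edgeFinset.2 (O.adj_of_dir _ _ (mem_filter.1 hp).2)
  · exact (mem_filter.1 hp).2

def ofTail (τ : G.edgeSet → V) (hτ : ∀ e : G.edgeSet, τ e ∈ (e : Sym2 V)) :
    GraphOrientation G where
  dir u v := ∃ h : G.Adj u v, τ ⟨s(u, v), h⟩ = u
  adj_of_dir _ _ h := h.1
  dir_iff_not u v h := by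
    have hswap : (⟨s(v, u), h.symm⟩ : G.edgeSet) = ⟨s(u, v), h⟩ := Subtype.ext Sym2.eq_swap
    constructor
    · rintro ⟨_, hu⟩ ⟨_, hv⟩
      rw [hswap] at hv
      exact h.ne (hu.symm.trans hv)
    · intro hvu
      refine ⟨h, (Sym2.mem_iff.1 (hτ ⟨s(u, v), h⟩)).resolve_right fun hτv => ?_⟩
      exact hvu ⟨h.symm, hswap ▸ hτv⟩

lemma outDegree_ofTail (τ : G.edgeSet → V) (hτ : ∀ e : G.edgeSet, τ e ∈ (e : Sym2 V))
    (v : V) :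
    (ofTail τ hτ).outDegree v = #{e | τ e = v} := by
  rw [outDegree_eq_card]
  refine card_bij (fun u hu => ⟨s(v, u), (ofTail τ hτ).adj_of_dir v u (mem_filter.1 hu).2⟩)
    (fun u hu => ?_) (fun u _ w _ h => ?_) (fun e he => ?_)
  · simpa using (mem_filter.1 hu).2.2
  · rcases Sym2.eq_iff.1 (congrArg Subtype.val h) with ⟨-, h⟩ | ⟨rfl, rfl⟩
    exacts [h, rfl]
  · have hτe : τ e = v := (mem_filter.1 he).2
    obtain ⟨u, hu⟩ := Sym2.mem_iff_exists.1 (hτe ▸ hτ e)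
    have hvu : G.Adj v u := G.mem_edgeSet.1 (hu ▸ e.2)
    have he_eq : (⟨s(v, u), hvu⟩ : G.edgeSet) = e := Subtype.ext hu.symm
    exact ⟨u, mem_filter.2 ⟨mem_univ u, hvu, he_eq ▸ hτe⟩, he_eq⟩

end GraphOrientation

namespace SimpleGraph

variable {V : Type*} [Fintype V] {G : SimpleGraph V}

lemma exists_tail_of_card_edgesWithin_le {δ : V → ℕ}
    (hHall : ∀ U : Finset V, #(G.edgesWithin U) ≤ ∑ u ∈ U, δ u) :
    ∃ τ : G.edgeSet → V, (∀ e : G.edgeSet, τ e ∈ (e : Sym2 V)) ∧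
      ∀ v, #{e | τ e = v} ≤ δ v := by
  let slots (e : G.edgeSet) : Finset (Σ v, Fin (δ v)) := {p | p.1 ∈ (e : Sym2 V)}
  have hslots (S : Finset G.edgeSet) : #S ≤ #(S.biUnion slots) := by
    let U : Finset V := {v | ∃ e ∈ S, v ∈ (e : Sym2 V)}
    have hU : S.biUnion slots = U.sigma fun _ => univ := by
      ext p
      simp [slots, U, and_comm]
    rw [hU, card_sigma]
    simp only [card_univ, Fintype.card_fin]
    refine le_trans ?_ (hHall U)
    refine card_le_card_of_injOn Subtype.val (fun e he => ?_) Subtype.val_injective.injOn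
    exact G.mem_edgesWithin.2 ⟨e.2, fun x hx => mem_filter.2 ⟨mem_univ x, e, he, hx⟩⟩
  obtain ⟨f, hf_inj, hf⟩ := (all_card_le_biUnion_card_iff_exists_injective slots).1 hslots
  exact ⟨fun e => (f e).1, fun e => by simpa [slots] using hf e,
    card_filter_fst_eq_le_of_injective hf_inj⟩

end SimpleGraph

theorem statement1_general {V : Type*} [Fintype V] (G : SimpleGraph V)
    (δ : V → ℕ) :
    (∃ O : GraphOrientation G, O.outDegree = δ) ↔
      (G.excess δ Finset.univ = 0 ∧ ∀ U : Finset V, 0 ≤ G.excess δ U) := by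
  simp only [G.excess_univ_eq_zero_iff, G.excess_nonneg_iff]
  constructor
  · rintro ⟨O, rfl⟩
    exact ⟨O.sum_outDegree_eq_card_edgeFinset, O.card_edgesWithin_le_sum_outDegree⟩
  · rintro ⟨hsum, hHall⟩
    obtain ⟨τ, hτ, hle⟩ := SimpleGraph.exists_tail_of_card_edgesWithin_le hHall
    refine ⟨GraphOrientation.ofTail τ hτ, funext fun v => ?_⟩
    rw [GraphOrientation.outDegree_ofTail]
    exact card_fiber_eq_of_le_of_sum_eq τ δ hle (by rw [hsum, G.edgeFinset_card]) v

theorem statement1 {V : Type*} [Fintype V] (G : SimpleGraph V) (hG : G.Connected)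
    (δ : V → ℕ) :
    (∃ O : GraphOrientation G, O.outDegree = δ) ↔
      (G.excess δ Finset.univ = 0 ∧ ∀ U : Finset V, 0 ≤ G.excess δ U) :=
  statement1_general G δ
end

section
/- Let G = (V,E) be a finite connected simple graph and let δ : V → ℕ be a function with Σ_{v∈V} δ(v) = |E|. Then δ is the outdegree function of some strongly connected orientation of G if and only if exc_δ(U) > 0 for every nonempty proper subset U ⊊ V. -/
namespace GraphOrientation
variable {V : Type*} {G : SimpleGraph V}

lemma dir_or (O : GraphOrientation G) {a b : V} (h : G.Adj a b) : O.dir a b ∨ O.dir b a := by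
  by_cases hd : O.dir b a
  · exact Or.inr hd
  · exact Or.inl ((O.dir_iff_not a b h).2 hd)

lemma not_dir_both (O : GraphOrientation G) {a b : V} (h1 : O.dir a b) (h2 : O.dir b a) : False :=
  (O.dir_iff_not a b (O.adj_of_dir a b h1)).1 h1 h2

lemma sum_outDegree_eq {V : Type*} [Fintype V] {G : SimpleGraph V}
    (O : GraphOrientation G) (U : Finset V) :
    ∑ u ∈ U, O.outDegree u =
      ({e | e ∈ G.edgeSet ∧ ∀ x ∈ e, x ∈ U} : Set (Sym2 V)).ncard
        + ∑ u ∈ U, {w | O.dir u w ∧ w ∉ U}.ncard := by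
  classical
  have hsplit : ∀ u : V, O.outDegree u =
      {w | O.dir u w ∧ w ∈ U}.ncard + {w | O.dir u w ∧ w ∉ U}.ncard := by
    intro u
    rw [outDegree, ← Set.ncard_union_eq (by
        simp only [Set.disjoint_left, Set.mem_setOf_eq]
        rintro x ⟨-, hx⟩ ⟨-, hx'⟩; exact hx' hx) (Set.toFinite _) (Set.toFinite _)]
    congr 1
    ext w
    simp only [Set.mem_setOf_eq, Set.mem_union]
    tauto
  rw [Finset.sum_congr rfl (fun u _ => hsplit u), Finset.sum_add_distrib]
  congr 1
  -- internal directed pairs biject with internal edges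
  have hfin : ∀ u : V, ({w | O.dir u w ∧ w ∈ U} : Set V).Finite := fun u => Set.toFinite _
  -- build the sigma finset
  set T : Finset ((_ : V) × V) := U.sigma (fun u => (hfin u).toFinset) with hT
  have hcardT : T.card = ∑ u ∈ U, {w | O.dir u w ∧ w ∈ U}.ncard := by
    rw [hT, Finset.card_sigma]
    exact Finset.sum_congr rfl fun u _ => ((Set.ncard_eq_toFinset_card' _).trans
      (by simp [Set.Finite.card_toFinset])).symm
  rw [← hcardT]
  have hIfin : ({e | e ∈ G.edgeSet ∧ ∀ x ∈ e, x ∈ U} : Set (Sym2 V)).Finite := Set.toFinite _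
  rw [Set.ncard_eq_toFinset_card _ hIfin]
  apply Finset.card_bij (fun p _ => s(p.1, p.2))
  · rintro ⟨a, b⟩ hp
    simp only [hT, Finset.mem_sigma, Set.Finite.mem_toFinset, Set.mem_setOf_eq] at hp
    obtain ⟨haU, hdir, hbU⟩ := hp
    rw [Set.Finite.mem_toFinset]
    refine ⟨(SimpleGraph.mem_edgeSet _).2 (O.adj_of_dir a b hdir), ?_⟩
    intro x hx
    rcases Sym2.mem_iff.1 hx with rfl | rfl
    · exact haU
    · exact hbU
  · rintro ⟨a, b⟩ hp ⟨c, d⟩ hq heq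
    simp only [hT, Finset.mem_sigma, Set.Finite.mem_toFinset, Set.mem_setOf_eq] at hp hq
    rcases Sym2.eq_iff.1 heq with ⟨rfl, rfl⟩ | ⟨rfl, rfl⟩
    · rfl
    · exact (O.not_dir_both hp.2.1 hq.2.1).elim
  · intro e he
    rw [Set.Finite.mem_toFinset] at he
    obtain ⟨hadj, hend⟩ := he
    induction e with
    | _ a b =>
      rw [SimpleGraph.mem_edgeSet] at hadj
      have haU : a ∈ U := hend a (by simp)
      have hbU : b ∈ U := hend b (by simp)
      rcases O.dir_or hadj with hd | hd
      · exact ⟨⟨a, b⟩, by simp [hT, Set.Finite.mem_toFinset, haU, hbU, hd], rfl⟩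
      · exact ⟨⟨b, a⟩, by simp [hT, Set.Finite.mem_toFinset, haU, hbU, hd], Sym2.eq_swap⟩

end GraphOrientation
namespace GraphOrientation

lemma excess_pos_iff {V : Type*} [Fintype V] {G : SimpleGraph V}
    (O : GraphOrientation G) (U : Finset V) :
    0 < G.excess O.outDegree U ↔ ∃ u ∈ U, ∃ w, O.dir u w ∧ w ∉ U := by
  classical
  have hkey := O.sum_outDegree_eq U
  have hexc : G.excess O.outDegree U = (∑ u ∈ U, ({w | O.dir u w ∧ w ∉ U} : Set V).ncard : ℤ) := by
    rw [SimpleGraph.excess]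
    have := congrArg (Nat.cast : ℕ → ℤ) hkey
    push_cast at this ⊢
    linarith
  rw [hexc]
  constructor
  · intro h
    have h' : ∃ u ∈ U, 0 < ({w | O.dir u w ∧ w ∉ U} : Set V).ncard := by
      by_contra hc
      push_neg at hc
      simp only [Nat.le_zero] at hc
      rw [Finset.sum_eq_zero (fun u hu => by rw [hc u hu]; norm_num)] at h
      exact lt_irrefl _ h
    obtain ⟨u, hu, hpos⟩ := h'
    obtain ⟨w, hw⟩ := (Set.ncard_pos (Set.toFinite _)).1 hpos
    exact ⟨u, hu, w, hw⟩
  · rintro ⟨u, hu, w, hw⟩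
    have h1 : 0 < ({w | O.dir u w ∧ w ∉ U} : Set V).ncard :=
      (Set.ncard_pos (Set.toFinite _)).2 ⟨w, hw⟩
    have : 0 < ∑ u ∈ U, ({w | O.dir u w ∧ w ∉ U} : Set V).ncard :=
      Finset.sum_pos' (fun _ _ => Nat.zero_le _) ⟨u, hu, h1⟩
    exact_mod_cast this

lemma reaches_mem {V : Type*} {G : SimpleGraph V} (O : GraphOrientation G) {U : Set V}
    (h : ∀ a ∈ U, ∀ b, O.dir a b → b ∈ U) {u x : V} (hu : u ∈ U) (hx : O.Reaches u x) :
    x ∈ U := by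
  induction hx with
  | refl => exact hu
  | tail _ hd ih => exact h _ ih _ hd

end GraphOrientation
lemma exists_orientation_of_excess {V : Type*} [Fintype V] {G : SimpleGraph V}
    (δ : V → ℕ) (hsum : ∑ v, δ v = G.edgeSet.ncard)
    (hexc : ∀ U : Finset V, U.Nonempty → U ≠ Finset.univ → 0 < G.excess δ U) :
    ∃ O : GraphOrientation G, O.outDegree = δ := by
  classical
  set α := Σ v : V, Fin (δ v)
  set t : G.edgeSet → Finset α := fun e => Finset.univ.filter (fun p => p.1 ∈ e.1) with ht
  -- Hall's condition
  have hall : ∀ s : Finset G.edgeSet, s.card ≤ (s.biUnion t).card := by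
    intro s
    rcases s.eq_empty_or_nonempty with rfl | hs
    · simp
    set U : Finset V := Finset.univ.filter (fun v => ∃ e ∈ s, v ∈ (e : G.edgeSet).1) with hU
    have hbiU : s.biUnion t = U.sigma (fun v => (Finset.univ : Finset (Fin (δ v)))) := by
      ext p
      rw [Finset.mem_biUnion, Finset.mem_sigma]
      simp only [ht, Finset.mem_filter, Finset.mem_univ, true_and, and_true, hU]
    have hcard : (s.biUnion t).card = ∑ v ∈ U, δ v := by
      rw [hbiU, Finset.card_sigma]; simp
    -- s injects into internal edges of U
    set I : Set (Sym2 V) := {e | e ∈ G.edgeSet ∧ ∀ x ∈ e, x ∈ U} with hI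
    have hIfin : I.Finite := Set.toFinite _
    have hsub : s.image (Subtype.val) ⊆ hIfin.toFinset := by
      intro e he
      rw [Finset.mem_image] at he
      obtain ⟨⟨e, heE⟩, hes, rfl⟩ := he
      rw [Set.Finite.mem_toFinset]
      refine ⟨heE, fun x hx => ?_⟩
      simp only [hU, Finset.mem_filter, Finset.mem_univ, true_and]
      exact ⟨⟨e, heE⟩, hes, hx⟩
    have h1 : s.card ≤ I.ncard := by
      rw [← Finset.card_image_of_injective s Subtype.val_injective,
        Set.ncard_eq_toFinset_card _ hIfin]
      exact Finset.card_le_card hsub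
    have h2 : (I.ncard : ℤ) ≤ ∑ v ∈ U, (δ v : ℤ) := by
      by_cases hUuniv : U = Finset.univ
      · have : I ⊆ G.edgeSet := fun e he => he.1
        calc (I.ncard : ℤ) ≤ G.edgeSet.ncard := by
              exact_mod_cast Set.ncard_le_ncard this (Set.toFinite _)
          _ = ∑ v, (δ v : ℤ) := by exact_mod_cast hsum.symm
          _ = ∑ v ∈ U, (δ v : ℤ) := by rw [hUuniv]
      · have hUne : U.Nonempty := by
          obtain ⟨e, he⟩ := hs
          refine ⟨(e : Sym2 V).out.1, ?_⟩
          simp only [hU, Finset.mem_filter, Finset.mem_univ, true_and]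
          exact ⟨e, he, Sym2.out_fst_mem _⟩
        have := hexc U hUne hUuniv
        rw [SimpleGraph.excess, ← hI] at this
        linarith
    have : (s.card : ℤ) ≤ ∑ v ∈ U, (δ v : ℤ) := le_trans (by exact_mod_cast h1) h2
    rw [hcard]
    exact_mod_cast this
  obtain ⟨f, hfinj, hf⟩ := (Finset.all_card_le_biUnion_card_iff_exists_injective t).1 hall
  have hfmem : ∀ e : G.edgeSet, (f e).1 ∈ e.1 := by
    intro e
    have := hf e
    simpa [ht] using this
  -- define the orientation
  set D : V → V → Prop := fun u v => ∃ h : G.Adj u v, (f ⟨s(u, v), h⟩).1 = u with hD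
  have hDnot : ∀ u v, G.Adj u v → (D u v ↔ ¬ D v u) := by
    intro u v h
    have hswap : (⟨s(v, u), h.symm⟩ : G.edgeSet) = ⟨s(u, v), h⟩ := Subtype.ext Sym2.eq_swap
    have hmem : (f ⟨s(u, v), h⟩).1 ∈ s(u, v) := hfmem ⟨s(u, v), h⟩
    rw [Sym2.mem_iff] at hmem
    constructor
    · rintro ⟨h1, hu⟩ ⟨h2, hv⟩
      rw [hswap] at hv
      exact h.ne (hu.symm.trans hv)
    · intro hnv
      refine ⟨h, ?_⟩
      rcases hmem with h' | h'
      · exact h'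
      · exact absurd ⟨h.symm, by rw [hswap]; exact h'⟩ hnv
  set O : GraphOrientation G := ⟨D, fun u v hd => hd.1, hDnot⟩ with hO
  refine ⟨O, ?_⟩
  funext v
  -- fibers
  set fib : V → Finset G.edgeSet := fun v => Finset.univ.filter (fun e => (f e).1 = v) with hfib
  have hout : ∀ v, O.outDegree v = (fib v).card := by
    intro v
    rw [GraphOrientation.outDegree, Set.ncard_eq_toFinset_card _ (Set.toFinite _)]
    apply Finset.card_bij (fun w hw => (⟨s(v, w), by
      rw [Set.Finite.mem_toFinset] at hw; exact hw.1⟩ : G.edgeSet))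
    · intro w hw
      rw [Set.Finite.mem_toFinset] at hw
      simp only [hfib, Finset.mem_filter, Finset.mem_univ, true_and]
      exact hw.2
    · intro w hw w' hw' heq
      have h2 : s(v, w) = s(v, w') := congrArg Subtype.val heq
      exact Sym2.congr_right.1 h2
    · intro e he
      simp only [hfib, Finset.mem_filter, Finset.mem_univ, true_and] at he
      have hv : v ∈ e.1 := he ▸ hfmem e
      obtain ⟨w, hw⟩ := Sym2.mem_iff_exists.1 hv
      have hadj : G.Adj v w := (SimpleGraph.mem_edgeSet _).1 (hw ▸ e.2)
      have heq : (⟨s(v, w), hadj⟩ : G.edgeSet) = e := Subtype.ext hw.symm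
      refine ⟨w, ?_, ?_⟩
      · rw [Set.Finite.mem_toFinset]
        exact ⟨hadj, by rw [heq]; exact he⟩
      · exact heq
  -- fiber cards sum to |E|
  have hsumfib : ∑ v, (fib v).card = G.edgeSet.ncard := by
    rw [← Nat.card_coe_set_eq, Nat.card_eq_fintype_card, ← Finset.card_univ]
    exact (Finset.card_eq_sum_card_fiberwise (fun e _ => Finset.mem_univ ((f e).1))).symm
  -- fiber cards bounded by δ
  have hle : ∀ v, (fib v).card ≤ δ v := by
    intro v
    have himg : (fib v).image f ⊆ ({v} : Finset V).sigma (fun v => (Finset.univ : Finset (Fin (δ v)))) := by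
      intro p hp
      rw [Finset.mem_image] at hp
      obtain ⟨e, he, rfl⟩ := hp
      simp only [hfib, Finset.mem_filter] at he
      rw [Finset.mem_sigma]
      exact ⟨Finset.mem_singleton.2 he.2, Finset.mem_univ _⟩
    calc (fib v).card = ((fib v).image f).card :=
          (Finset.card_image_of_injective _ hfinj).symm
      _ ≤ (({v} : Finset V).sigma (fun v => (Finset.univ : Finset (Fin (δ v))))).card :=
          Finset.card_le_card himg
      _ = δ v := by rw [Finset.card_sigma]; simp
  have : ∀ v ∈ Finset.univ, (fib v).card = δ v := by
    rw [← Finset.sum_eq_sum_iff_of_le (fun v _ => hle v)]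
    rw [hsumfib, hsum]
  rw [hout v, this v (Finset.mem_univ v)]
theorem statement2 {V : Type*} [Fintype V] (G : SimpleGraph V) (hG : G.Connected)
    (δ : V → ℕ) (hsum : ∑ v, δ v = G.edgeSet.ncard) :
    (∃ O : GraphOrientation G, O.IsStronglyConnected ∧ O.outDegree = δ) ↔
      ∀ U : Finset V, U.Nonempty → U ≠ Finset.univ → 0 < G.excess δ U := by
  classical
  constructor
  · rintro ⟨O, hSC, rfl⟩
    intro U hUne hUuniv
    rw [O.excess_pos_iff U]
    by_contra hno
    push_neg at hno
    obtain ⟨u, hu⟩ := hUne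
    obtain ⟨v, hv⟩ : ∃ v, v ∉ U := by
      by_contra hc
      push_neg at hc
      exact hUuniv (Finset.eq_univ_iff_forall.2 hc)
    exact hv (O.reaches_mem (U := (U : Set V))
      (fun a ha b hab => by
        by_contra hbU
        exact hbU (hno a ha b hab)) hu (hSC u v))
  · intro hexc
    obtain ⟨O, hdeg⟩ := exists_orientation_of_excess δ hsum hexc
    refine ⟨O, ?_, hdeg⟩
    intro u v
    set R : Finset V := Finset.univ.filter (O.Reaches u) with hR
    have hRv : ∀ w, w ∈ R ↔ O.Reaches u w := by
      intro w; simp [hR]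
    have hRuniv : R = Finset.univ := by
      by_contra hne
      have hRne : R.Nonempty := ⟨u, (hRv u).2 Relation.ReflTransGen.refl⟩
      have := hexc R hRne hne
      rw [← hdeg, O.excess_pos_iff R] at this
      obtain ⟨a, ha, b, hab, hbR⟩ := this
      exact hbR ((hRv b).2 (Relation.ReflTransGen.tail ((hRv a).1 ha) hab))
    exact (hRv v).1 (hRuniv ▸ Finset.mem_univ v)
end

section
/- (Minty's lemma) Let G = (V,E) be a finite connected simple graph and let O be an orientation of G. Every edge of G belongs either to a directed cycle of O or to a directed cocycle of O, but not both. -/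
/-! Orient the edge as `a → b`. Both alternatives are decided by whether `a` can be reached from
`b` along a directed path. If it can, a directed path from `b` to `a` closes up with `ab` into a
directed cycle. If not, let `R` be the set of vertices reachable from `b` and `A` the component
of `a` after deleting the edges between `R` and its complement. Every edge leaving `A` enters
`R`, and `R` is closed under out-edges, so every such edge points out of `A`; `A` is connected
and, as `G` is, so is its complement, hence the cut of `A` is a directed cocycle through `ab`.
Conversely, the head side of a directed cocycle is closed under out-edges, so no directed path
leads back from `b` to `a`, whereas a directed cycle through `ab` contains one. -/

namespace SimpleGraph

variable {V : Type*} {G : SimpleGraph V}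

lemma mk_mem_cutSet_iff {U : Set V} {x y : V} :
    s(x, y) ∈ G.cutSet U ↔ G.Adj x y ∧ ¬(x ∈ U ↔ y ∈ U) := by
  constructor
  · rintro ⟨a, b, hab, hadj, ha, hb⟩
    rcases Sym2.eq_iff.1 hab with ⟨rfl, rfl⟩ | ⟨rfl, rfl⟩
    · exact ⟨hadj, by tauto⟩
    · exact ⟨hadj.symm, by tauto⟩
  · rintro ⟨hxy, hU⟩
    by_cases hx : x ∈ U
    · exact ⟨x, y, rfl, hxy, hx, fun hy => hU (iff_of_true hx hy)⟩
    · exact ⟨y, x, Sym2.eq_swap, hxy.symm, by tauto, hx⟩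

lemma cutSet_compl (U : Set V) : G.cutSet Uᶜ = G.cutSet U := by
  ext e
  induction e using Sym2.ind with
  | _ x y => simp only [mk_mem_cutSet_iff, Set.mem_compl_iff, not_iff_not]

lemma mem_iff_of_reachable_deleteEdges {U : Set V} {D : Set (Sym2 V)} (hUD : G.cutSet U ⊆ D)
    {u v : V} (h : (G.deleteEdges D).Reachable u v) : u ∈ U ↔ v ∈ U := by
  rw [reachable_iff_reflTransGen] at h
  induction h with
  | refl => rfl
  | tail _ hxy ih =>
    obtain ⟨hxy, hD⟩ := deleteEdges_adj.1 hxy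
    exact ih.trans (not_not.1 fun h => hD (hUD (mk_mem_cutSet_iff.2 ⟨hxy, h⟩)))

lemma isCocycle_cutSet_of_reachable {S : Set V} {a b : V} (hab : G.Adj a b) (ha : a ∈ S)
    (hb : b ∉ S)
    (hreach : ∀ v, (G.deleteEdges (G.cutSet S)).Reachable a v ∨
      (G.deleteEdges (G.cutSet S)).Reachable b v) :
    G.IsCocycle (G.cutSet S) := by
  refine ⟨⟨s(a, b), mk_mem_cutSet_iff.2 ⟨hab, by tauto⟩⟩, ⟨S, rfl⟩, ?_⟩
  rintro _ ⟨f, hf⟩ ⟨W, rfl⟩ hsub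
  refine hsub.antisymm ?_
  have hS : ∀ {u v}, (G.deleteEdges (G.cutSet S)).Reachable u v → (u ∈ S ↔ v ∈ S) :=
    mem_iff_of_reachable_deleteEdges subset_rfl
  have hW : ∀ {u v}, (G.deleteEdges (G.cutSet S)).Reachable u v → (u ∈ W ↔ v ∈ W) :=
    mem_iff_of_reachable_deleteEdges hsub
  have hside : ∀ v, (v ∈ S → (v ∈ W ↔ a ∈ W)) ∧ (v ∉ S → (v ∈ W ↔ b ∈ W)) := by
    intro v
    rcases hreach v with h | h
    · exact ⟨fun _ => (hW h).symm, fun hv => absurd ((hS h).1 ha) hv⟩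
    · exact ⟨fun hv => absurd ((hS h).2 hv) hb, fun _ => (hW h).symm⟩
  have hsplit : ¬(a ∈ W ↔ b ∈ W) := by
    intro hab
    induction f using Sym2.ind with
    | _ x y =>
      have := hside x
      have := hside y
      exact (mk_mem_cutSet_iff.1 hf).2 (by tauto)
  intro f hf
  induction f using Sym2.ind with
  | _ x y =>
    obtain ⟨hxy, hxyS⟩ := mk_mem_cutSet_iff.1 hf
    have := hside x
    have := hside y
    exact mk_mem_cutSet_iff.2 ⟨hxy, by tauto⟩

lemma reachable_deleteEdges_cutSet_of_boundary (hG : G.Preconnected) {A : Set V} {b : V}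
    (hb : b ∉ A)
    (hbdry : ∀ x y, G.Adj x y → x ∈ A → y ∉ A → (G.deleteEdges (G.cutSet A)).Reachable b y)
    {v : V} (hv : v ∉ A) : (G.deleteEdges (G.cutSet A)).Reachable b v := by
  obtain ⟨p⟩ := hG v b
  induction p with
  | nil => rfl
  | @cons v y _ hvy _ ih =>
    by_cases hy : y ∈ A
    · exact hbdry y v hvy.symm hy hv
    · have hyv : (G.deleteEdges (G.cutSet A)).Adj y v :=
        deleteEdges_adj.2 ⟨hvy.symm, fun h => (mk_mem_cutSet_iff.1 h).2 (iff_of_false hy hv)⟩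
      exact (ih hb hbdry hy).trans hyv.reachable

end SimpleGraph

namespace GraphOrientation

open SimpleGraph

variable {V : Type*} {G : SimpleGraph V} (O : GraphOrientation G)

lemma asymm {u v : V} (h : O.dir u v) : ¬O.dir v u :=
  (O.dir_iff_not u v (O.adj_of_dir u v h)).1 h

lemma Reaches.exists_walk {O : GraphOrientation G} {u v : V} (h : O.Reaches u v) :
    ∃ p : G.Walk u v, ∀ d ∈ p.darts, O.dir d.fst d.snd := by
  induction h with
  | refl => exact ⟨.nil, by simp⟩
  | tail _ hyz ih =>
    obtain ⟨p, hp⟩ := ih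
    refine ⟨p.concat (O.adj_of_dir _ _ hyz), fun d hd => ?_⟩
    rw [Walk.darts_concat, List.concat_eq_append, List.mem_append, List.mem_singleton] at hd
    rcases hd with hd | rfl
    exacts [hp d hd, hyz]

lemma reaches_of_walk {u v : V} (p : G.Walk u v) (hp : ∀ d ∈ p.darts, O.dir d.fst d.snd) :
    O.Reaches u v := by
  induction p with
  | nil => exact .refl
  | cons h q ih =>
    simp only [Walk.darts_cons, List.mem_cons, forall_eq_or_imp] at hp
    exact .head hp.1 (ih hp.2)

lemma reaches_of_mem_darts {u v : V} (p : G.Walk u v) (hp : ∀ d ∈ p.darts, O.dir d.fst d.snd)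
    {d : G.Dart} (hd : d ∈ p.darts) : O.Reaches u d.fst ∧ O.Reaches d.snd v := by
  induction p with
  | nil => simp at hd
  | cons h q ih =>
    simp only [Walk.darts_cons, List.mem_cons, forall_eq_or_imp] at hp hd
    rcases hd with rfl | hd
    · exact ⟨.refl, O.reaches_of_walk q hp.2⟩
    · exact (ih hp.2 hd).imp_left (.head hp.1)

lemma reaches_of_mem_isDirCycle {C : Set (Sym2 V)} (hC : O.IsDirCycle C) {a b : V}
    (habC : s(a, b) ∈ C) (hab : O.dir a b) : O.Reaches b a := by
  obtain ⟨v, w, -, hw, rfl⟩ := hC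
  obtain ⟨d, hd, hde⟩ := List.mem_map.1 habC
  obtain ⟨hva, hbv⟩ := O.reaches_of_mem_darts w hw hd
  rcases dart_edge_eq_mk'_iff'.1 hde with ⟨hda, hdb⟩ | ⟨hdb, hda⟩
  · rw [hda] at hva
    rw [hdb] at hbv
    exact hbv.trans hva
  · exact absurd (hda ▸ hdb ▸ hw d hd) (O.asymm hab)

lemma exists_isDirCycle_of_reaches {a b : V} (hab : O.dir a b) (hba : O.Reaches b a) :
    ∃ C, O.IsDirCycle C ∧ s(a, b) ∈ C := by
  classical
  obtain ⟨p, hp⟩ := hba.exists_walk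
  have hpath : p.bypass.IsPath := p.bypass_isPath
  have hq : ∀ d ∈ p.bypass.darts, O.dir d.fst d.snd :=
    fun d hd => hp d (p.darts_bypass_subset_darts hd)
  have hadj := O.adj_of_dir a b hab
  -- a path from `b` to `a` can only use the edge `ab` as its single dart `(b, a)`
  have hnot : s(a, b) ∉ p.bypass.edges := fun h => by
    have h' : s(b, a) ∈ p.bypass.edges := Sym2.eq_swap ▸ h
    refine O.asymm hab (hq ⟨(b, a), hadj.symm⟩ ?_)
    rw [hpath.eq_adj_toWalk_of_mem_edges h', Adj.darts_toWalk]
    exact List.mem_singleton_self _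
  refine ⟨{e | e ∈ (Walk.cons hadj p.bypass).edges},
    ⟨a, _, (Walk.cons_isCycle_iff _ hadj).2 ⟨hpath, hnot⟩, ?_, rfl⟩, by simp⟩
  simp only [Walk.darts_cons, List.mem_cons, forall_eq_or_imp]
  exact ⟨hab, hq⟩

lemma not_reaches_of_mem_isDirCocycle {D : Set (Sym2 V)} (hD : O.IsDirCocycle D) {a b : V}
    (habD : s(a, b) ∈ D) (hab : O.dir a b) : ¬O.Reaches b a := by
  obtain ⟨-, U, rfl, hU⟩ := hD
  have hclosed : ∀ x y, O.dir x y → x ∈ U → y ∈ U := fun x y hxy hx => by_contra fun hy =>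
    hy (hU x y hxy (mk_mem_cutSet_iff.2 ⟨O.adj_of_dir x y hxy, fun h => hy (h.1 hx)⟩))
  have hbU := hU a b hab habD
  have hreach : ∀ v, O.Reaches b v → v ∈ U := fun v hv => by
    induction hv with
    | refl => exact hbU
    | tail _ hxy ih => exact hclosed _ _ hxy ih
  exact fun hba => (mk_mem_cutSet_iff.1 habD).2 (iff_of_true (hreach a hba) hbU)

lemma Reaches.reachable_deleteEdges_cutSet {O : GraphOrientation G} {u v : V}
    (h : O.Reaches u v) : (G.deleteEdges (G.cutSet {w | O.Reaches u w})).Reachable u v := by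
  induction h with
  | refl => rfl
  | @tail x y hux hxy ih =>
    refine ih.trans (deleteEdges_adj.2 ⟨O.adj_of_dir x y hxy, fun h => ?_⟩).reachable
    exact (mk_mem_cutSet_iff.1 h).2 (iff_of_true hux (hux.tail hxy))

lemma exists_isDirCocycle_of_not_reaches (hG : G.Preconnected) {a b : V} (hab : O.dir a b)
    (hba : ¬O.Reaches b a) : ∃ D, O.IsDirCocycle D ∧ s(a, b) ∈ D := by
  set R := {v | O.Reaches b v}
  set A := {v | (G.deleteEdges (G.cutSet R)).Reachable a v}
  have hadj := O.adj_of_dir a b hab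
  have hAR : ∀ v ∈ A, v ∉ R := fun v hv hvR =>
    hba ((mem_iff_of_reachable_deleteEdges subset_rfl hv).2 hvR)
  have hbdry : ∀ x y, G.Adj x y → x ∈ A → y ∉ A → y ∈ R ∧ O.dir x y := by
    intro x y hxy hx hy
    have hyR : y ∈ R := by_contra fun hyR => hy <| hx.trans <| Adj.reachable <|
      deleteEdges_adj.2 ⟨hxy, fun h => (mk_mem_cutSet_iff.1 h).2 (iff_of_false (hAR x hx) hyR)⟩
    exact ⟨hyR, (O.dir_iff_not x y hxy).2 fun hyx => hAR x hx (hyR.tail hyx)⟩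
  have hcut : G.cutSet A ⊆ G.cutSet R := by
    intro e he
    induction e using Sym2.ind with
    | _ x y =>
      obtain ⟨hxy, hA⟩ := mk_mem_cutSet_iff.1 he
      refine mk_mem_cutSet_iff.2 ⟨hxy, fun hR => ?_⟩
      by_cases hx : x ∈ A
      · exact hAR x hx (hR.2 (hbdry x y hxy hx fun hy => hA (iff_of_true hx hy)).1)
      · have hy : y ∈ A := by_contra fun hy => hA (iff_of_false hx hy)
        exact hAR y hy (hR.1 (hbdry y x hxy.symm hy hx).1)
  have hmono := deleteEdges_anti (G := G) hcut
  have haA : a ∈ A := Reachable.refl a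
  have hbA : b ∉ A := fun h => hAR b h .refl
  refine ⟨G.cutSet A,
    ⟨isCocycle_cutSet_of_reachable hadj haA hbA fun v => ?_, Aᶜ, (cutSet_compl A).symm, ?_⟩,
    mk_mem_cutSet_iff.2 ⟨hadj, fun h => hbA (h.1 haA)⟩⟩
  · by_cases hv : v ∈ A
    · exact .inl (hv.mono hmono)
    · refine .inr (reachable_deleteEdges_cutSet_of_boundary hG hbA (fun x y hxy hx hy => ?_) hv)
      exact (hbdry x y hxy hx hy).1.reachable_deleteEdges_cutSet.mono hmono
  · intro x y hxy hD hy
    obtain ⟨hadj, hA⟩ := mk_mem_cutSet_iff.1 hD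
    have hx : x ∉ A := fun hx => hA (iff_of_true hx hy)
    exact O.asymm hxy (hbdry y x hadj.symm hy hx).2

theorem exists_isDirCycle_mem_iff_reaches {a b : V} (hab : O.dir a b) :
    (∃ C, O.IsDirCycle C ∧ s(a, b) ∈ C) ↔ O.Reaches b a :=
  ⟨fun ⟨_, hC, habC⟩ => O.reaches_of_mem_isDirCycle hC habC hab,
    O.exists_isDirCycle_of_reaches hab⟩

theorem exists_isDirCocycle_mem_iff_not_reaches (hG : G.Preconnected) {a b : V}
    (hab : O.dir a b) : (∃ D, O.IsDirCocycle D ∧ s(a, b) ∈ D) ↔ ¬O.Reaches b a :=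
  ⟨fun ⟨_, hD, habD⟩ => O.not_reaches_of_mem_isDirCocycle hD habD hab,
    O.exists_isDirCocycle_of_not_reaches hG hab⟩

end GraphOrientation

theorem statement4_general {V : Type*} (G : SimpleGraph V) (hG : G.Connected)
    (O : GraphOrientation G) (e : Sym2 V) (he : e ∈ G.edgeSet) :
    Xor' (∃ C : Set (Sym2 V), O.IsDirCycle C ∧ e ∈ C)
      (∃ D : Set (Sym2 V), O.IsDirCocycle D ∧ e ∈ D) := by
  induction e using Sym2.ind with
  | _ a b =>
    rw [SimpleGraph.mem_edgeSet] at he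
    wlog hab : O.dir a b generalizing a b
    · rw [Sym2.eq_swap]
      exact this b a he.symm ((O.dir_iff_not b a he.symm).2 hab)
    rw [O.exists_isDirCycle_mem_iff_reaches hab,
      O.exists_isDirCocycle_mem_iff_not_reaches hG.preconnected hab]
    exact xor_iff_iff_not.2 not_not.symm

theorem statement4 {V : Type*} [Fintype V] (G : SimpleGraph V) (hG : G.Connected)
    (O : GraphOrientation G) (e : Sym2 V) (he : e ∈ G.edgeSet) :
    Xor' (∃ C : Set (Sym2 V), O.IsDirCycle C ∧ e ∈ C)
      (∃ D : Set (Sym2 V), O.IsDirCocycle D ∧ e ∈ D) :=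
  statement4_general G hG O e he
end

section
/- Let G = (V,E) be a finite simple graph and let O and O' be two orientations of G having the same outdegree function. Let K = {e ∈ E : O(e) ≠ O'(e)} be the set of edges on which they differ. Then every edge e ∈ K lies in an O-directed cycle whose edge set is contained in K. -/
open scoped Classical

private lemma aux_deg_eq {V : Type*} [Fintype V] {G : SimpleGraph V}
    (O O' : GraphOrientation G) (hdeg : O.outDegree = O'.outDegree) (v : V) :
    (Finset.univ.filter (fun u => O.dir v u ∧ O'.dir u v)).card
      = (Finset.univ.filter (fun u => O.dir u v ∧ O'.dir v u)).card := by
  classical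
  have h1 : ∀ u : V, (if O.dir v u then (1 : ℕ) else 0)
      = (if O.dir v u ∧ O'.dir v u then 1 else 0)
        + (if O.dir v u ∧ O'.dir u v then 1 else 0) := by
    intro u
    by_cases hd : O.dir v u
    · by_cases hd' : O'.dir v u
      · have hnot : ¬ O'.dir u v :=
          (O'.dir_iff_not v u (O.adj_of_dir v u hd)).mp hd'
        simp [hd, hd', hnot]
      · have hyes : O'.dir u v :=
          (O'.dir_iff_not u v (O.adj_of_dir v u hd).symm).mpr hd'
        simp [hd, hd', hyes]
    · simp [hd]
  have h2 : ∀ u : V, (if O'.dir v u then (1 : ℕ) else 0)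
      = (if O.dir v u ∧ O'.dir v u then 1 else 0)
        + (if O.dir u v ∧ O'.dir v u then 1 else 0) := by
    intro u
    by_cases hd : O'.dir v u
    · by_cases hd' : O.dir v u
      · have hnot : ¬ O.dir u v :=
          (O.dir_iff_not v u (O'.adj_of_dir v u hd)).mp hd'
        simp [hd, hd', hnot]
      · have hyes : O.dir u v :=
          (O.dir_iff_not u v (O'.adj_of_dir v u hd).symm).mpr hd'
        simp [hd, hd', hyes]
    · simp [hd]
  have hOcard : O.outDegree v = ∑ u : V, (if O.dir v u then (1 : ℕ) else 0) := by
    rw [GraphOrientation.outDegree, Set.ncard_eq_toFinset_card', Set.toFinset_setOf,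
      Finset.card_filter]
  have hO'card : O'.outDegree v = ∑ u : V, (if O'.dir v u then (1 : ℕ) else 0) := by
    rw [GraphOrientation.outDegree, Set.ncard_eq_toFinset_card', Set.toFinset_setOf,
      Finset.card_filter]
  have hvv := congrFun hdeg v
  rw [hOcard, hO'card] at hvv
  simp only [h1, h2, Finset.sum_add_distrib] at hvv
  rw [Finset.card_filter, Finset.card_filter]
  omega

private lemma aux_reach_back {V : Type*} [Fintype V] {R : V → V → Prop}
    (hdeg : ∀ v, (Finset.univ.filter (fun u => R v u)).card
      = (Finset.univ.filter (fun u => R u v)).card)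
    {a b : V} (hab : R a b) : Relation.ReflTransGen R b a := by
  classical
  by_contra hnot
  set S : Finset V := Finset.univ.filter (fun v => Relation.ReflTransGen R b v) with hS
  have hbS : b ∈ S := by
    simp only [hS, Finset.mem_filter, Finset.mem_univ, true_and]
    exact Relation.ReflTransGen.refl
  have haS : a ∉ S := by simp [hS, hnot]
  have hclosed : ∀ ⦃v u : V⦄, v ∈ S → R v u → u ∈ S := by
    intro v u hv hvu
    simp only [hS, Finset.mem_filter, Finset.mem_univ, true_and] at hv ⊢
    exact hv.tail hvu
  set f : V × V → ℕ := fun p => if R p.1 p.2 then 1 else 0 with hf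
  have key1 : ∑ p ∈ S ×ˢ S, f p = ∑ p ∈ S ×ˢ Finset.univ, f p := by
    apply Finset.sum_subset
    · exact Finset.product_subset_product_right (Finset.subset_univ S)
    · intro p hp hnp
      rw [hf]
      simp only
      rw [if_neg]
      intro hRp
      rw [Finset.mem_product] at hp hnp
      exact hnp ⟨hp.1, hclosed hp.1 hRp⟩
  have key2 : ∑ p ∈ S ×ˢ Finset.univ, f p = ∑ p ∈ Finset.univ ×ˢ S, f p := by
    rw [Finset.sum_product, Finset.sum_product]
    have hvv : ∀ v : V, ∑ u : V, f (v, u) = ∑ u : V, f (u, v) := by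
      intro v
      have h1 : ∑ u : V, f (v, u) = (Finset.univ.filter (fun u => R v u)).card := by
        rw [Finset.card_filter]
      have h2 : ∑ u : V, f (u, v) = (Finset.univ.filter (fun u => R u v)).card := by
        rw [Finset.card_filter]
      rw [h1, h2, hdeg]
    calc ∑ x ∈ S, ∑ y : V, f (x, y) = ∑ x ∈ S, ∑ y : V, f (y, x) :=
          Finset.sum_congr rfl (fun v _ => hvv v)
      _ = ∑ y : V, ∑ x ∈ S, f (y, x) := Finset.sum_comm
  have key3 : ∑ p ∈ S ×ˢ S, f p < ∑ p ∈ Finset.univ ×ˢ S, f p := by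
    apply Finset.sum_lt_sum_of_subset
      (Finset.product_subset_product_left (Finset.subset_univ S))
      (i := (a, b))
    · rw [Finset.mem_product]
      exact ⟨Finset.mem_univ a, hbS⟩
    · rw [Finset.mem_product]
      intro h
      exact haS h.1
    · simp [hf, hab]
    · intro j _ _
      exact Nat.zero_le _
  omega

private lemma aux_walk_of_rtg {V : Type*} {G : SimpleGraph V} {R : V → V → Prop}
    (hR : ∀ u v, R u v → G.Adj u v) {x y : V} (h : Relation.ReflTransGen R x y) :
    ∃ p : G.Walk x y, ∀ d ∈ p.darts, R d.toProd.1 d.toProd.2 := by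
  induction h with
  | refl => exact ⟨SimpleGraph.Walk.nil, by simp⟩
  | tail _ hcy ih =>
    obtain ⟨p, hp⟩ := ih
    refine ⟨p.append (SimpleGraph.Walk.cons (hR _ _ hcy) SimpleGraph.Walk.nil), ?_⟩
    intro d hd
    rw [SimpleGraph.Walk.darts_append] at hd
    rcases List.mem_append.mp hd with hd | hd
    · exact hp d hd
    · simp only [SimpleGraph.Walk.darts_cons, SimpleGraph.Walk.darts_nil,
        List.mem_singleton] at hd
      subst hd
      exact hcy

theorem statement9 {V : Type*} [Fintype V] (G : SimpleGraph V)
    (O O' : GraphOrientation G) (hdeg : O.outDegree = O'.outDegree) :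
    ∀ e ∈ O.diffSet O', ∃ C : Set (Sym2 V),
      O.IsDirCycle C ∧ e ∈ C ∧ C ⊆ O.diffSet O' := by
  classical
  intro e he
  obtain ⟨a, b, heq, hOab, hO'ba⟩ := he
  set R : V → V → Prop := fun u v => O.dir u v ∧ O'.dir v u with hRdef
  have hRadj : ∀ u v, R u v → G.Adj u v := fun u v h => O.adj_of_dir u v h.1
  have hreach : Relation.ReflTransGen R b a :=
    aux_reach_back (R := R)
      (fun v => by have h := aux_deg_eq O O' hdeg v; convert h using 2 <;> (ext u; simp [hRdef])) ⟨hOab, hO'ba⟩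
  obtain ⟨p, hp⟩ := aux_walk_of_rtg hRadj hreach
  set q := p.bypass with hq
  have hqpath : q.IsPath := p.bypass_isPath
  have hqd : ∀ d ∈ q.darts, R d.toProd.1 d.toProd.2 :=
    fun d hd => hp d (p.darts_bypass_subset hd)
  have hadj : G.Adj a b := O.adj_of_dir a b hOab
  have hnotmem : s(a, b) ∉ q.edges := by
    intro hmem
    rw [SimpleGraph.Walk.edges] at hmem
    obtain ⟨d, hd, hde⟩ := List.mem_map.mp hmem
    have hR : R d.toProd.1 d.toProd.2 := hqd d hd
    rw [SimpleGraph.Dart.edge, Sym2.eq_iff] at hde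
    rcases hde with ⟨h1, h2⟩ | ⟨h1, h2⟩
    · -- d = (a, b), so a occurs as a non-final vertex of the path q : b → a
      have hds : d.symm ∈ q.reverse.darts := by
        rw [SimpleGraph.Walk.darts_reverse, List.mem_reverse, List.mem_map]
        exact ⟨d, hd, rfl⟩
      have ha_tail : a ∈ q.reverse.support.tail := by
        rw [← SimpleGraph.Walk.map_snd_darts]
        rw [List.mem_map]
        refine ⟨d.symm, hds, ?_⟩
        simp [SimpleGraph.Dart.symm, h1]
      have hnodup : q.reverse.support.Nodup := hqpath.reverse.support_nodup
      rw [q.reverse.support_eq_cons] at hnodup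
      exact (List.nodup_cons.mp hnodup).1 ha_tail
    · -- d = (b, a): then O.dir b a contradicting O.dir a b
      have : O.dir b a := by rw [← h1, ← h2]; exact hR.1
      exact ((O.dir_iff_not a b hadj).mp hOab) this
  set w : G.Walk a a := SimpleGraph.Walk.cons hadj q with hw
  have hcyc : w.IsCycle := by
    rw [SimpleGraph.Walk.cons_isCycle_iff]
    exact ⟨hqpath, hnotmem⟩
  refine ⟨{e' | e' ∈ w.edges}, ⟨a, w, hcyc, ?_, rfl⟩, ?_, ?_⟩
  · intro d hd
    rw [hw, SimpleGraph.Walk.darts_cons] at hd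
    rcases List.mem_cons.mp hd with hd | hd
    · subst hd; exact hOab
    · exact (hqd d hd).1
  · rw [heq]
    simp [hw, SimpleGraph.Walk.edges_cons]
  · intro f hf
    simp only [Set.mem_setOf_eq, hw, SimpleGraph.Walk.edges_cons, List.mem_cons] at hf
    rcases hf with rfl | hf
    · exact ⟨a, b, rfl, hOab, hO'ba⟩
    · rw [SimpleGraph.Walk.edges] at hf
      obtain ⟨d, hd, hde⟩ := List.mem_map.mp hf
      have hR := hqd d hd
      exact ⟨d.toProd.1, d.toProd.2, by rw [← hde]; rfl, hR.1, hR.2⟩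
end

section
/- Let G = (V,E) be a finite simple graph and let O and O' be two orientations of G. Then O and O' have the same outdegree function if and only if O' can be obtained from O by a finite sequence of cycle-flips; moreover, the flipped cycles can be chosen so that each flipped cycle is contained in the set of edges on which the current orientation and O' differ. -/
/-- One cycle-flip step in which the flipped cycle is contained in the set of edges on
which the current orientation differs from the target orientation `Ot`. -/
def GraphOrientation.CycleFlipWithinDiff {V : Type*} {G : SimpleGraph V}
    (Ot : GraphOrientation G) (O O' : GraphOrientation G) : Prop :=
  ∃ C, O.IsDirCycle C ∧ C ⊆ O.diffSet Ot ∧ O.IsFlipOn O' C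

/-!
Flipping a set `A` of edges changes the outdegree of `x` by the number of edges of `A` entering
`x` minus the number leaving it, so the flip preserves all outdegrees exactly when `A` is
balanced. A directed cycle is balanced, which gives one direction. Conversely, if `O` and `O'`
have the same outdegrees, the edges on which they differ form a balanced set for `O`, since `O'`
is `O` flipped on them. Walking backwards inside this set from any of its edges, balance always
provides an incoming edge, so the walk eventually closes up into a directed cycle of `O` inside
the difference set; flipping it strictly shrinks the difference set.
-/

lemma List.Nodup.ncard_setOf_mem_and_eq {α β : Type*} [DecidableEq β] {l : List α}
    (hl : l.Nodup) (f : α → β) (b : β) :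
    {a | a ∈ l ∧ f a = b}.ncard = (l.map f).count b := by
  classical
  have hP : (l.map f).count b = l.countP (fun a => f a = b) := by
    simp only [List.count, List.countP_map, Function.comp_def]
    rfl
  rw [hP, ← hl.card_eq_countP, ← Set.ncard_coe_finset]
  congr
  ext
  simp

namespace SimpleGraph.Walk

variable {V : Type*} {G : SimpleGraph V}

lemma ncard_darts_fst_eq_ncard_darts_snd {u : V} (w : G.Walk u u) (hw : w.darts.Nodup) (x : V) :
    {d | d ∈ w.darts ∧ d.fst = x}.ncard = {d | d ∈ w.darts ∧ d.snd = x}.ncard := by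
  classical
  rw [hw.ncard_setOf_mem_and_eq, hw.ncard_setOf_mem_and_eq, map_fst_darts, map_snd_darts]
  exact (w.tail_support_perm_dropLast_support.count_eq x).symm

lemma IsPath.fst_ne_of_mem_darts {u v : V} {p : G.Walk u v} (hp : p.IsPath) {d : G.Dart}
    (hd : d ∈ p.darts) : d.fst ≠ v := by
  rintro rfl
  have hfst : d.fst ∈ p.support.dropLast := p.map_fst_darts ▸ List.mem_map_of_mem hd
  have hnodup := hp.support_nodup
  rw [← p.dropLast_support_concat, List.nodup_append] at hnodup
  exact hnodup.2.2 _ hfst _ (List.mem_singleton_self _) rfl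

end SimpleGraph.Walk

namespace GraphOrientation

variable {V : Type*} {G : SimpleGraph V} {O O' : GraphOrientation G} {A : Set (Sym2 V)}

lemma not_dir_of_dir_s10 (O : GraphOrientation G) {u v : V} (h : O.dir u v) : ¬ O.dir v u :=
  (O.dir_iff_not u v (O.adj_of_dir u v h)).mp h

lemma dir_of_not_dir (O : GraphOrientation G) {u v : V} (h : G.Adj u v) (h' : ¬ O.dir v u) :
    O.dir u v :=
  (O.dir_iff_not u v h).mpr h'

lemma ext (h : ∀ u v, O.dir u v ↔ O'.dir u v) : O = O' := by
  cases O
  cases O'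
  congr
  ext u v
  exact h u v

open Classical in
def flip (O : GraphOrientation G) (A : Set (Sym2 V)) : GraphOrientation G where
  dir u v := if s(u, v) ∈ A then O.dir v u else O.dir u v
  adj_of_dir u v h := by
    split_ifs at h
    · exact (O.adj_of_dir _ _ h).symm
    · exact O.adj_of_dir _ _ h
  dir_iff_not u v hadj := by
    rw [Sym2.eq_swap (a := v)]
    split_ifs
    · exact O.dir_iff_not v u hadj.symm
    · exact O.dir_iff_not u v hadj

lemma isFlipOn_flip (O : GraphOrientation G) (A : Set (Sym2 V)) : O.IsFlipOn (O.flip A) A :=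
  ⟨fun u v h => by simp [flip, h], fun u v h => by simp [flip, h]⟩

lemma isFlipOn_diffSet (O O' : GraphOrientation G) : O.IsFlipOn O' (O.diffSet O') := by
  constructor
  · rintro u v ⟨a, b, hab, ha, hb⟩
    rcases Sym2.eq_iff.mp hab with ⟨rfl, rfl⟩ | ⟨rfl, rfl⟩
    · exact iff_of_false (O'.not_dir_of_dir_s10 hb) (O.not_dir_of_dir_s10 ha)
    · exact iff_of_true hb ha
  · refine fun u v huv => ⟨fun h => ?_, fun h => ?_⟩
    · by_contra h'
      exact huv ⟨v, u, Sym2.eq_swap, O.dir_of_not_dir (O'.adj_of_dir _ _ h).symm h', h⟩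
    · by_contra h'
      exact huv ⟨u, v, rfl, h, O'.dir_of_not_dir (O.adj_of_dir _ _ h).symm h'⟩

lemma eq_of_diffSet_eq_empty (h : O.diffSet O' = ∅) : O = O' :=
  ext fun u v => ((O.isFlipOn_diffSet O').2 u v (h ▸ Set.notMem_empty _)).symm

lemma diffSet_of_isFlipOn {O₂ : GraphOrientation G} {C : Set (Sym2 V)}
    (hC : C ⊆ O.diffSet O') (hf : O.IsFlipOn O₂ C) :
    O₂.diffSet O' = O.diffSet O' \ C := by
  ext e
  constructor
  · rintro ⟨a, b, rfl, h₂, h'⟩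
    have hab : s(a, b) ∉ C := by
      intro hab
      obtain ⟨c, d, hcd, hc, hd⟩ := hC hab
      rcases Sym2.eq_iff.mp hcd with ⟨rfl, rfl⟩ | ⟨rfl, rfl⟩
      · exact O.not_dir_of_dir_s10 ((hf.1 a b hab).mp h₂) hc
      · exact O'.not_dir_of_dir_s10 h' hd
    exact ⟨⟨a, b, rfl, (hf.2 a b hab).mp h₂, h'⟩, hab⟩
  · rintro ⟨⟨a, b, rfl, h, h'⟩, hab⟩
    exact ⟨a, b, rfl, (hf.2 a b hab).mpr h, h'⟩

noncomputable def outDegreeOn (O : GraphOrientation G) (A : Set (Sym2 V)) (x : V) : ℕ :=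
  {u | O.dir x u ∧ s(x, u) ∈ A}.ncard

noncomputable def inDegreeOn (O : GraphOrientation G) (A : Set (Sym2 V)) (x : V) : ℕ :=
  {u | O.dir u x ∧ s(x, u) ∈ A}.ncard

def IsBalancedOn (O : GraphOrientation G) (A : Set (Sym2 V)) : Prop :=
  ∀ x, O.outDegreeOn A x = O.inDegreeOn A x

lemma outDegree_eq_outDegreeOn_add [Finite V] (O : GraphOrientation G) (A : Set (Sym2 V))
    (x : V) : O.outDegree x = O.outDegreeOn A x + {u | O.dir x u ∧ s(x, u) ∉ A}.ncard :=
  (Set.ncard_inter_add_ncard_sdiff_eq_ncard {u | O.dir x u} {u | s(x, u) ∈ A}).symm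

lemma IsFlipOn.outDegree_eq_inDegreeOn_add [Finite V] (hf : O.IsFlipOn O' A) (x : V) :
    O'.outDegree x = O.inDegreeOn A x + {u | O.dir x u ∧ s(x, u) ∉ A}.ncard := by
  rw [outDegree, ← Set.ncard_inter_add_ncard_sdiff_eq_ncard _ {u | s(x, u) ∈ A}]
  congr 2 <;> ext u
  · exact and_congr_left (hf.1 x u)
  · exact and_congr_left (hf.2 x u)

lemma IsFlipOn.outDegree_eq_iff [Finite V] (hf : O.IsFlipOn O' A) :
    O.outDegree = O'.outDegree ↔ O.IsBalancedOn A := by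
  simp only [funext_iff, O.outDegree_eq_outDegreeOn_add A, hf.outDegree_eq_inDegreeOn_add,
    Nat.add_right_cancel_iff]
  rfl

lemma dir_and_mem_edges_iff {u v : V} {w : G.Walk u v}
    (hw : ∀ d ∈ w.darts, O.dir d.fst d.snd) {x y : V} :
    O.dir x y ∧ s(x, y) ∈ w.edges ↔ ∃ d ∈ w.darts, d.fst = x ∧ d.snd = y := by
  constructor
  · rintro ⟨hxy, hmem⟩
    obtain ⟨d, hd, hde⟩ := List.mem_map.mp hmem
    rcases SimpleGraph.dart_edge_eq_mk'_iff.mp hde with h | h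
    · exact ⟨d, hd, congrArg Prod.fst h, congrArg Prod.snd h⟩
    · exact absurd (by simpa [h] using hw d hd) (O.not_dir_of_dir_s10 hxy)
  · rintro ⟨d, hd, rfl, rfl⟩
    exact ⟨hw d hd, List.mem_map_of_mem hd⟩

lemma IsDirCycle.isBalancedOn {C : Set (Sym2 V)} (hC : O.IsDirCycle C) : O.IsBalancedOn C := by
  obtain ⟨v, w, hw, hdir, rfl⟩ := hC
  have hnodup : w.darts.Nodup := hw.edges_nodup.of_map _
  intro x
  have hout : {u | O.dir x u ∧ s(x, u) ∈ {e | e ∈ w.edges}} =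
      (fun d : G.Dart => d.snd) '' {d | d ∈ w.darts ∧ d.fst = x} := by
    ext u
    simp [dir_and_mem_edges_iff hdir, and_assoc]
  have hin : {u | O.dir u x ∧ s(x, u) ∈ {e | e ∈ w.edges}} =
      (fun d : G.Dart => d.fst) '' {d | d ∈ w.darts ∧ d.snd = x} := by
    ext u
    simp only [Set.mem_ofPred_eq, Sym2.eq_swap (a := x), dir_and_mem_edges_iff hdir, Set.mem_image]
    exact exists_congr fun d => by tauto
  rw [outDegreeOn, inDegreeOn, hout, hin, Set.InjOn.ncard_image, Set.InjOn.ncard_image]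
  · exact w.ncard_darts_fst_eq_ncard_darts_snd hnodup x
  · exact fun d hd d' hd' h => SimpleGraph.Dart.ext _ _ (Prod.ext h (hd.2.trans hd'.2.symm))
  · exact fun d hd d' hd' h => SimpleGraph.Dart.ext _ _ (Prod.ext (hd.2.trans hd'.2.symm) h)

open SimpleGraph.Walk in
lemma exists_isDirCycle_subset_of_isPath [Fintype V] (hA : O.IsBalancedOn A) {y z : V}
    (p : G.Walk y z) (hp : p.IsPath) (hpA : ∀ d ∈ p.darts, O.dir d.fst d.snd ∧ d.edge ∈ A)
    (hy : 0 < O.outDegreeOn A y) : ∃ C, O.IsDirCycle C ∧ C ⊆ A := by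
  classical
  rw [hA y, inDegreeOn, Set.ncard_pos] at hy
  obtain ⟨x, hxy, hyxA⟩ := hy
  have hadj : G.Adj x y := O.adj_of_dir _ _ hxy
  have hxyA : s(x, y) ∈ A := Sym2.eq_swap ▸ hyxA
  by_cases hx : x ∈ p.support
  · set q := p.takeUntil x hx
    have hqA : ∀ d ∈ q.darts, O.dir d.fst d.snd ∧ d.edge ∈ A :=
      fun d hd => hpA d (p.darts_takeUntil_subset_darts hx hd)
    have hcA : ∀ d ∈ (cons hadj q).darts, O.dir d.fst d.snd ∧ d.edge ∈ A := by
      rintro d (_ | ⟨_, hd⟩)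
      · exact ⟨hxy, hxyA⟩
      · exact hqA d hd
    refine ⟨{e | e ∈ (cons hadj q).edges}, ⟨x, cons hadj q, ?_, fun d hd => (hcA d hd).1, rfl⟩, ?_⟩
    · refine (cons_isCycle_iff q hadj).mpr ⟨hp.takeUntil hx, fun he => ?_⟩
      obtain ⟨d, hd, hde⟩ := List.mem_map.mp he
      rcases SimpleGraph.dart_edge_eq_mk'_iff.mp hde with h | h
      · exact (hp.takeUntil hx).fst_ne_of_mem_darts hd (congrArg Prod.fst h)
      · exact O.not_dir_of_dir_s10 hxy (by simpa [h] using (hqA d hd).1)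
    · intro e he
      obtain ⟨d, hd, rfl⟩ := List.mem_map.mp he
      exact (hcA d hd).2
  · refine exists_isDirCycle_subset_of_isPath hA (cons hadj p) (hp.cons hx) ?_ ?_
    · rintro d (_ | ⟨_, hd⟩)
      · exact ⟨hxy, hxyA⟩
      · exact hpA d hd
    · exact (Set.ncard_pos).mpr ⟨y, hxy, hxyA⟩
termination_by Fintype.card V - p.length
decreasing_by
  have := hp.length_lt
  simp only [length_cons]
  omega

lemma exists_isDirCycle_subset [Fintype V] (hA : O.IsBalancedOn A) {a b : V} (hab : O.dir a b)
    (habA : s(a, b) ∈ A) : ∃ C, O.IsDirCycle C ∧ C ⊆ A :=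
  exists_isDirCycle_subset_of_isPath hA .nil .nil (by simp) ((Set.ncard_pos).mpr ⟨b, hab, habA⟩)

lemma IsDirCycle.nonempty {C : Set (Sym2 V)} (hC : O.IsDirCycle C) : C.Nonempty := by
  obtain ⟨v, w, hw, -, rfl⟩ := hC
  cases w with
  | nil => exact absurd rfl hw.ne_nil
  | cons h p => exact ⟨_, List.mem_cons_self ..⟩

lemma CycleFlip.outDegree_eq [Finite V] : O.CycleFlip O' → O.outDegree = O'.outDegree
  | ⟨_, hC, hf⟩ => hf.outDegree_eq_iff.mpr hC.isBalancedOn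

lemma CycleFlipWithinDiff.cycleFlip {Ot : GraphOrientation G} :
    CycleFlipWithinDiff Ot O O' → O.CycleFlip O'
  | ⟨C, hC, _, hf⟩ => ⟨C, hC, hf⟩

theorem reflTransGen_cycleFlipWithinDiff [Fintype V] {O : GraphOrientation G}
    (h : O.outDegree = O'.outDegree) :
    Relation.ReflTransGen (CycleFlipWithinDiff O') O O' := by
  obtain hD | ⟨e, he⟩ := (O.diffSet O').eq_empty_or_nonempty
  · rw [eq_of_diffSet_eq_empty hD]
  obtain ⟨a, b, rfl, hab, -⟩ := id he
  have hbal := (O.isFlipOn_diffSet O').outDegree_eq_iff.mp h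
  obtain ⟨C, hC, hCD⟩ := exists_isDirCycle_subset hbal hab he
  have hf := O.isFlipOn_flip C
  have hlt : ((O.flip C).diffSet O').ncard < (O.diffSet O').ncard := by
    rw [diffSet_of_isFlipOn hCD hf, Set.ncard_sdiff hCD]
    have := (Set.ncard_pos).mpr hC.nonempty
    have := Set.ncard_le_ncard hCD
    omega
  exact .head ⟨C, hC, hCD, hf⟩
    (reflTransGen_cycleFlipWithinDiff ((hf.outDegree_eq_iff.mpr hC.isBalancedOn).symm.trans h))
termination_by (O.diffSet O').ncard
decreasing_by exact hlt

end GraphOrientation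

theorem statement10 {V : Type*} [Fintype V] (G : SimpleGraph V)
    (O O' : GraphOrientation G) :
    (O.outDegree = O'.outDegree ↔ Relation.ReflTransGen GraphOrientation.CycleFlip O O') ∧
      (O.outDegree = O'.outDegree →
        Relation.ReflTransGen (GraphOrientation.CycleFlipWithinDiff O') O O') := by
  refine ⟨⟨fun h => ?_, fun h => ?_⟩, GraphOrientation.reflTransGen_cycleFlipWithinDiff⟩
  · exact Relation.ReflTransGen.mono (fun _ _ => GraphOrientation.CycleFlipWithinDiff.cycleFlip)
      _ _ (GraphOrientation.reflTransGen_cycleFlipWithinDiff h)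
  · induction h with
    | refl => rfl
    | tail _ hflip ih => exact ih.trans hflip.outDegree_eq
end
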